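/- arXiv:1212.3918 — 4 statements merged into one kernel-verified Lean document; each statement's English description precedes it below -/
import Mathlib

section
/- For every real η > 0 there exists a constant C_η > 0 such that for every integer N ≥ 1 and every family (a_j)_{j ≥ -1} of nonnegative real numbers with Σ_{j ≥ -1} (2+j)^η a_j < ∞, one has Σ_{q ≥ -1} (2+q)^η Σ_{j ≥ -1, j < q/2 - N} 2^{-(1/2)(q/2 - j)} a_j ≤ C_η 2^{-N/2} N^η Σ_{j ≥ -1} (2+j)^η a_j. -/
/-!
Exchange the two sums (Tonelli). For a fixed `j ≥ -1` the admissible `q` are `q = 2j + 2N + n`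
with `n ≥ 1`; for these `2^{-(q/2 - j)/2} = 2^{-N/2} 2^{-n/4}` and `2 + q ≤ 2N(2 + j)(n + 1)`,
so the sum over `q` is at most `2^η N^η (2 + j)^η 2^{-N/2} ∑ₙ (n + 1)^η 2^{-n/4}`, and this last
series converges because polynomial growth is beaten by geometric decay.
-/

open scoped ENNReal NNReal

theorem summable_add_one_rpow_mul_geometric (s : ℝ) {r : ℝ} (hr₀ : 0 < r) (hr₁ : r < 1) :
    Summable fun n : ℕ => ((n : ℝ) + 1) ^ s * r ^ n := by
  set k := ⌈s⌉₊
  have hk : Summable fun n : ℕ => ((n : ℝ) + 1) ^ k * r ^ n := by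
    have hshift : Summable fun n : ℕ => ((n + 1 : ℕ) : ℝ) ^ k * r ^ (n + 1) :=
      (summable_nat_add_iff (f := fun n : ℕ => (n : ℝ) ^ k * r ^ n) 1).mpr
        (summable_pow_mul_geometric_of_norm_lt_one k (by rwa [Real.norm_of_nonneg hr₀.le]))
    refine (hshift.mul_left r⁻¹).congr fun n => ?_
    push_cast
    field_simp
    ring
  refine Summable.of_nonneg_of_le (fun n => by positivity) (fun n => ?_) hk
  gcongr
  calc ((n : ℝ) + 1) ^ s ≤ ((n : ℝ) + 1) ^ (k : ℝ) :=
        Real.rpow_le_rpow_of_exponent_le (by linarith [n.cast_nonneg (α := ℝ)]) (Nat.le_ceil s)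
    _ = ((n : ℝ) + 1) ^ k := Real.rpow_natCast _ _

noncomputable def polyDyadicWeight (η : ℝ) (n : ℕ) : ℝ≥0∞ :=
  ENNReal.ofReal ((n : ℝ) + 1) ^ η * ENNReal.ofReal (2 ^ (-(n : ℝ) / 4))

theorem tsum_polyDyadicWeight_ne_top (η : ℝ) : ∑' n, polyDyadicWeight η n ≠ ⊤ := by
  have hr₀ : (0 : ℝ) < 2 ^ (-(1 : ℝ) / 4) := by positivity
  have hr₁ : (2 : ℝ) ^ (-(1 : ℝ) / 4) < 1 :=
    Real.rpow_lt_one_of_one_lt_of_neg one_lt_two (by norm_num)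
  have hsum := summable_add_one_rpow_mul_geometric η hr₀ hr₁
  have hweight : ∀ n, polyDyadicWeight η n =
      ENNReal.ofReal (((n : ℝ) + 1) ^ η * (2 ^ (-(1 : ℝ) / 4)) ^ n) := fun n => by
    rw [polyDyadicWeight, ENNReal.ofReal_rpow_of_pos (by positivity),
      ← ENNReal.ofReal_mul (by positivity), ← Real.rpow_mul_natCast zero_le_two]
    ring_nf
  simp_rw [hweight]
  rw [← ENNReal.ofReal_tsum_of_nonneg (fun n => by positivity) hsum]
  exact ENNReal.ofReal_ne_top

theorem one_le_tsum_polyDyadicWeight (η : ℝ) : 1 ≤ ∑' n, polyDyadicWeight η n :=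
  calc (1 : ℝ≥0∞) = polyDyadicWeight η 0 := by simp [polyDyadicWeight]
    _ ≤ ∑' n, polyDyadicWeight η n := ENNReal.le_tsum 0

theorem two_add_le_two_mul_mul_mul {N j x : ℝ} (hN : 1 ≤ N) (hj : -1 ≤ j) (hx : 0 ≤ x) :
    2 + (2 * j + 2 * N + x) ≤ 2 * N * (2 + j) * (x + 1) := by
  nlinarith [mul_nonneg (sub_nonneg.2 hN) (by linarith : (0 : ℝ) ≤ 1 + j),
    mul_nonneg (mul_nonneg (by linarith : (0 : ℝ) ≤ N) (by linarith : (0 : ℝ) ≤ 2 + j)) hx]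

theorem ofReal_rpow_mul_ofReal_two_rpow_le {η : ℝ} (hη : 0 ≤ η) {N j : ℝ} (hN : 1 ≤ N)
    (hj : -1 ≤ j) (n : ℕ) :
    ENNReal.ofReal (2 + (2 * j + 2 * N + n)) ^ η *
        ENNReal.ofReal (2 ^ (-(1 / 2 : ℝ) * ((2 * j + 2 * N + n) / 2 - j))) ≤
      2 ^ η * ENNReal.ofReal (2 ^ (-N / 2)) * ENNReal.ofReal N ^ η *
        ENNReal.ofReal (2 + j) ^ η * polyDyadicWeight η n := by
  have hsize : ENNReal.ofReal (2 + (2 * j + 2 * N + n)) ^ η ≤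
      2 ^ η * ENNReal.ofReal N ^ η * ENNReal.ofReal (2 + j) ^ η *
        ENNReal.ofReal ((n : ℝ) + 1) ^ η :=
    calc ENNReal.ofReal (2 + (2 * j + 2 * N + n)) ^ η
        ≤ ENNReal.ofReal (2 * N * (2 + j) * (n + 1)) ^ η :=
          ENNReal.rpow_le_rpow (ENNReal.ofReal_le_ofReal
            (two_add_le_two_mul_mul_mul hN hj n.cast_nonneg)) hη
      _ = _ := by
          have h2j : 0 ≤ 2 + j := by linarith
          rw [ENNReal.ofReal_mul (by positivity), ENNReal.ofReal_mul (by positivity),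
            ENNReal.ofReal_mul zero_le_two, ENNReal.mul_rpow_of_nonneg _ _ hη,
            ENNReal.mul_rpow_of_nonneg _ _ hη, ENNReal.mul_rpow_of_nonneg _ _ hη,
            ENNReal.ofReal_ofNat]
  have hdecay : ENNReal.ofReal (2 ^ (-(1 / 2 : ℝ) * ((2 * j + 2 * N + n) / 2 - j))) =
      ENNReal.ofReal (2 ^ (-N / 2)) * ENNReal.ofReal (2 ^ (-(n : ℝ) / 4)) := by
    rw [← ENNReal.ofReal_mul (by positivity), ← Real.rpow_add two_pos]
    ring_nf
  rw [hdecay, polyDyadicWeight]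
  calc _ ≤ (2 ^ η * ENNReal.ofReal N ^ η * ENNReal.ofReal (2 + j) ^ η *
          ENNReal.ofReal ((n : ℝ) + 1) ^ η) *
        (ENNReal.ofReal (2 ^ (-N / 2)) * ENNReal.ofReal (2 ^ (-(n : ℝ) / 4))) :=
        mul_le_mul_left hsize _
    _ = _ := by ring

noncomputable def lowFreqTerm (η : ℝ) (N : ℕ) (j q : ℤ) : ℝ≥0∞ :=
  if (j : ℝ) < (q : ℝ) / 2 - N then
    ENNReal.ofReal (2 + (q : ℝ)) ^ η * ENNReal.ofReal (2 ^ (-(1 / 2 : ℝ) * ((q : ℝ) / 2 - j)))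
  else 0

theorem tsum_lowFreqTerm_le {η : ℝ} (hη : 0 ≤ η) {N : ℕ} (hN : 1 ≤ N) {j : ℤ} (hj : -1 ≤ j) :
    ∑' q, lowFreqTerm η N j q ≤
      2 ^ η * (∑' n, polyDyadicWeight η n) * ENNReal.ofReal (2 ^ (-(N : ℝ) / 2)) *
        (N : ℝ≥0∞) ^ η * ENNReal.ofReal (2 + j) ^ η := by
  set q₀ : ℤ := 2 * j + 2 * N
  have hsupp : Function.support (lowFreqTerm η N j) ⊆ Set.range fun n : ℕ => q₀ + n := by
    intro q hq
    have hlt : q₀ < q := by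
      by_contra hle
      refine hq (if_neg fun h => ?_)
      have : (q : ℝ) ≤ q₀ := by exact_mod_cast not_lt.1 hle
      push_cast [q₀] at this
      linarith
    exact ⟨(q - q₀).toNat, show q₀ + ((q - q₀).toNat : ℤ) = q by omega⟩
  have hinj : Function.Injective fun n : ℕ => q₀ + n :=
    (add_right_injective q₀).comp Nat.cast_injective
  rw [← hinj.tsum_eq hsupp, ← ENNReal.ofReal_natCast N]
  calc _ ≤ ∑' n : ℕ, 2 ^ η * ENNReal.ofReal (2 ^ (-(N : ℝ) / 2)) * ENNReal.ofReal N ^ η *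
        ENNReal.ofReal (2 + j) ^ η * polyDyadicWeight η n := by
        refine ENNReal.tsum_le_tsum fun n => ?_
        rw [lowFreqTerm]
        split_ifs
        · have h := ofReal_rpow_mul_ofReal_two_rpow_le hη (N := N) (by exact_mod_cast hN)
            (by exact_mod_cast hj : (-1 : ℝ) ≤ j) n
          push_cast [q₀]
          exact h
        · exact zero_le
    _ = _ := by rw [ENNReal.tsum_mul_left]; ring

/-- Low-frequency summation estimate in the proof of Proposition 5.1: for `η > 0` there is
`C_η > 0` such that for every integer `N ≥ 1` and nonnegative `(a_j)_{j ≥ -1}` with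
`Σ_{j ≥ -1} (2+j)^η a_j < ∞`,
`Σ_{q ≥ -1} (2+q)^η Σ_{j ≥ -1, j < q/2 - N} 2^{-(1/2)(q/2-j)} a_j
  ≤ C_η 2^{-N/2} N^η Σ_{j ≥ -1} (2+j)^η a_j`. -/
theorem lowfreq_double_sum_estimate (η : ℝ) (hη : 0 < η) :
    ∃ C : ℝ≥0, 0 < C ∧ ∀ N : ℕ, 1 ≤ N → ∀ a : ℤ → ℝ≥0,
      (∑' j : ℤ, if -1 ≤ j then (ENNReal.ofReal (2 + (j:ℝ))) ^ η * (a j : ℝ≥0∞) else 0) < ⊤ →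
      (∑' q : ℤ, if -1 ≤ q then
          (ENNReal.ofReal (2 + (q:ℝ))) ^ η *
            ∑' j : ℤ, if -1 ≤ j ∧ (j:ℝ) < (q:ℝ)/2 - N then
                ENNReal.ofReal ((2:ℝ) ^ (-(1/2 : ℝ) * ((q:ℝ)/2 - (j:ℝ)))) * (a j : ℝ≥0∞)
              else 0
        else 0)
      ≤ (C : ℝ≥0∞) * ENNReal.ofReal ((2:ℝ) ^ (-(N:ℝ)/2)) * (N : ℝ≥0∞) ^ η *
          ∑' j : ℤ, if -1 ≤ j then (ENNReal.ofReal (2 + (j:ℝ))) ^ η * (a j : ℝ≥0∞) else 0 := by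
  set C : ℝ≥0∞ := 2 ^ η * ∑' n, polyDyadicWeight η n
  have hC_ne_top : C ≠ ⊤ := ENNReal.mul_ne_top
    (ENNReal.rpow_ne_top_of_nonneg hη.le ENNReal.ofNat_ne_top) (tsum_polyDyadicWeight_ne_top η)
  have hC_ne_zero : C ≠ 0 := mul_ne_zero (by positivity)
    (one_pos.trans_le (one_le_tsum_polyDyadicWeight η)).ne'
  refine ⟨C.toNNReal, ENNReal.toNNReal_pos hC_ne_zero hC_ne_top, fun N hN a _ => ?_⟩
  rw [ENNReal.coe_toNNReal hC_ne_top, ← ENNReal.tsum_mul_left]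
  calc _ ≤ ∑' q : ℤ, ∑' j : ℤ, ENNReal.ofReal (2 + (q : ℝ)) ^ η *
        (if -1 ≤ j ∧ (j : ℝ) < (q : ℝ) / 2 - N then
          ENNReal.ofReal (2 ^ (-(1 / 2 : ℝ) * ((q : ℝ) / 2 - j))) * a j else 0) :=
        ENNReal.tsum_le_tsum fun q => by
          split_ifs
          · rw [ENNReal.tsum_mul_left]
          · exact zero_le
    _ = ∑' j : ℤ, ∑' q : ℤ, ENNReal.ofReal (2 + (q : ℝ)) ^ η *
        (if -1 ≤ j ∧ (j : ℝ) < (q : ℝ) / 2 - N then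
          ENNReal.ofReal (2 ^ (-(1 / 2 : ℝ) * ((q : ℝ) / 2 - j))) * a j else 0) :=
        ENNReal.tsum_comm
    _ ≤ _ := ENNReal.tsum_le_tsum fun j => by
        by_cases hj : -1 ≤ j
        · simp only [hj, true_and, if_true, ← mul_assoc, mul_ite, mul_zero]
          calc _ = (∑' q, lowFreqTerm η N j q) * a j := by
                rw [← ENNReal.tsum_mul_right]
                simp only [lowFreqTerm, ite_mul, zero_mul]
            _ ≤ _ := mul_le_mul_left (tsum_lowFreqTerm_le hη.le hN hj) _
        · simp [hj]
end

section
/- For every real η > 0 there exists a constant C_η > 0 such that for every integer N ≥ 1 and every family (a_j)_{j ≥ -1} of nonnegative real numbers with Σ_{j ≥ -1} (2+j)^η a_j < ∞, one has Σ_{q ≥ -1} (2+q)^η Σ_{j ≥ -1, j > 3q/2 + N} 2^{-(1/2)(j - 3q/2)} a_j ≤ C_η 2^{-N/2} N^η Σ_{j ≥ -1} (2+j)^η a_j. -/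
/-!
Exchange the order of summation. For fixed `j`, every admissible `q` satisfies `q ≤ j`, so
`(2+q)^η ≤ (2+j)^η`, and `2^{-(j-3q/2)/2} = 2^{-N/2} 2^{-m/4}` with `m = 2j - 3q - 2N` a positive
integer that determines `q`. Hence the sum over `q` is at most
`2^{-N/2} (2+j)^η Σ_{m ≥ 1} 2^{-m/4} ≤ 7 · 2^{-N/2} (2+j)^η`, and `N^η ≥ 1`.
-/

open scoped ENNReal NNReal

lemma two_rpow_neg_one_quarter_le : (2:ℝ) ^ (-(1/4) : ℝ) ≤ 6/7 := by
  have h : (7/6 : ℝ) ≤ 2 ^ (1/4 : ℝ) := by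
    refine le_of_pow_le_pow_left₀ four_ne_zero (by positivity) ?_
    rw [← Real.rpow_natCast (2 ^ (1/4 : ℝ)), ← Real.rpow_mul zero_le_two]
    norm_num
  rw [Real.rpow_neg zero_le_two, show (6/7 : ℝ) = (7/6)⁻¹ by norm_num]
  exact inv_anti₀ (by norm_num) h

lemma tsum_ofReal_two_rpow_neg_div_four_le :
    ∑' n : ℕ, ENNReal.ofReal (2 ^ (-(n:ℝ)/4)) ≤ 7 := by
  set r : ℝ := 2 ^ (-(1/4) : ℝ)
  have hr₀ : 0 ≤ r := by positivity
  have hr : r < 1 := two_rpow_neg_one_quarter_le.trans_lt (by norm_num)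
  have hpow (n : ℕ) : (2:ℝ) ^ (-(n:ℝ)/4) = r ^ n := by
    rw [← Real.rpow_natCast, ← Real.rpow_mul zero_le_two]
    ring_nf
  simp_rw [hpow]
  rw [← ENNReal.ofReal_tsum_of_nonneg (fun n => pow_nonneg hr₀ n)
    (summable_geometric_of_lt_one hr₀ hr), tsum_geometric_of_lt_one hr₀ hr,
    ← ENNReal.ofReal_ofNat 7]
  refine ENNReal.ofReal_le_ofReal (inv_le_of_inv_le₀ (by norm_num) ?_)
  linarith [two_rpow_neg_one_quarter_le]

lemma tsum_int_ite_two_rpow_neg_div_four_le :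
    ∑' m : ℤ, (if 0 < m then ENNReal.ofReal (2 ^ (-(m:ℝ)/4)) else 0) ≤ 7 := by
  have hsupp : Function.support
      (fun m : ℤ => if 0 < m then ENNReal.ofReal (2 ^ (-(m:ℝ)/4)) else 0) ⊆
      Set.range ((↑) : ℕ → ℤ) := by
    intro m hm
    simp only [Function.mem_support, ne_eq, ite_eq_right_iff, not_forall] at hm
    exact ⟨m.toNat, Int.toNat_of_nonneg hm.1.le⟩
  rw [← Nat.cast_injective.tsum_eq hsupp]
  refine (ENNReal.tsum_le_tsum fun n => ?_).trans tsum_ofReal_two_rpow_neg_div_four_le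
  split_ifs <;> simp

lemma tsum_weighted_kernel_le {η : ℝ} (hη : 0 ≤ η) (N : ℕ) (j : ℤ) :
    ∑' q : ℤ, (if -1 ≤ q ∧ 3*(q:ℝ)/2 + N < (j:ℝ) then
        ENNReal.ofReal (2 + (q:ℝ)) ^ η * ENNReal.ofReal ((2:ℝ) ^ (-(1/2 : ℝ) * ((j:ℝ) - 3*(q:ℝ)/2)))
      else 0)
      ≤ 7 * ENNReal.ofReal ((2:ℝ) ^ (-(N:ℝ)/2)) * ENNReal.ofReal (2 + (j:ℝ)) ^ η := by
  set G : ℤ → ℝ≥0∞ := fun m => if 0 < m then ENNReal.ofReal (2 ^ (-(m:ℝ)/4)) else 0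
  set c := ENNReal.ofReal (2 + (j:ℝ)) ^ η * ENNReal.ofReal ((2:ℝ) ^ (-(N:ℝ)/2))
  have hterm (q : ℤ) : (if -1 ≤ q ∧ 3*(q:ℝ)/2 + N < (j:ℝ) then
        ENNReal.ofReal (2 + (q:ℝ)) ^ η * ENNReal.ofReal ((2:ℝ) ^ (-(1/2 : ℝ) * ((j:ℝ) - 3*(q:ℝ)/2)))
      else 0) ≤ c * G (2*j - 3*q - 2*N) := by
    split_ifs with hq
    · obtain ⟨hq, hlt⟩ := hq
      have hgap : 3*q + 2*(N:ℤ) < 2*j := by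
        have : (3*q + 2*N : ℝ) < 2*j := by linarith
        exact_mod_cast this
      have hqj : (q:ℝ) ≤ j := by exact_mod_cast (show q ≤ j by omega)
      have hsplit : (2:ℝ) ^ (-(1/2 : ℝ) * ((j:ℝ) - 3*(q:ℝ)/2)) =
          2 ^ (-(N:ℝ)/2) * 2 ^ (-((2*j - 3*q - 2*N : ℤ) : ℝ)/4) := by
        rw [← Real.rpow_add two_pos]
        push_cast
        ring_nf
      simp only [G, if_pos (show 0 < 2*j - 3*q - 2*(N:ℤ) by omega), c, hsplit,
        ENNReal.ofReal_mul (by positivity : (0:ℝ) ≤ 2 ^ (-(N:ℝ)/2)), ← mul_assoc]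
      gcongr
    · exact zero_le
  have hinj : Function.Injective (fun q : ℤ => 2*j - 3*q - 2*(N:ℤ)) := by
    intro x y h
    simp only at h
    omega
  calc _ ≤ ∑' q : ℤ, c * G (2*j - 3*q - 2*N) := ENNReal.tsum_le_tsum hterm
    _ = c * ∑' q : ℤ, G (2*j - 3*q - 2*N) := ENNReal.tsum_mul_left
    _ ≤ c * 7 := by
      gcongr
      exact (ENNReal.tsum_comp_le_tsum_of_injective hinj G).trans
        tsum_int_ite_two_rpow_neg_div_four_le
    _ = _ := by ring

lemma tsum_weighted_column_le {η : ℝ} (hη : 0 ≤ η) (N : ℕ) (a : ℤ → ℝ≥0∞) (j : ℤ) :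
    ∑' q : ℤ, (if -1 ≤ q then ENNReal.ofReal (2 + (q:ℝ)) ^ η *
        (if -1 ≤ j ∧ 3*(q:ℝ)/2 + N < (j:ℝ) then
          ENNReal.ofReal ((2:ℝ) ^ (-(1/2 : ℝ) * ((j:ℝ) - 3*(q:ℝ)/2))) * a j else 0)
      else 0)
      ≤ 7 * ENNReal.ofReal ((2:ℝ) ^ (-(N:ℝ)/2)) *
        (if -1 ≤ j then ENNReal.ofReal (2 + (j:ℝ)) ^ η * a j else 0) := by
  split_ifs with hj
  · have h := mul_le_mul_left (tsum_weighted_kernel_le hη N j) (a j)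
    rw [← ENNReal.tsum_mul_right] at h
    convert h using 1
    · exact tsum_congr fun q => by by_cases hq : -1 ≤ q <;> simp [hq, hj, mul_assoc]
    · ring
  · simp [hj]

/-- High-frequency summation estimate in the proof of Proposition 5.1: for `η > 0` there is
`C_η > 0` such that for every integer `N ≥ 1` and nonnegative `(a_j)_{j ≥ -1}` with
`Σ_{j ≥ -1} (2+j)^η a_j < ∞`,
`Σ_{q ≥ -1} (2+q)^η Σ_{j ≥ -1, j > 3q/2 + N} 2^{-(1/2)(j-3q/2)} a_j
  ≤ C_η 2^{-N/2} N^η Σ_{j ≥ -1} (2+j)^η a_j`. -/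
theorem highfreq_double_sum_estimate (η : ℝ) (hη : 0 < η) :
    ∃ C : ℝ≥0, 0 < C ∧ ∀ N : ℕ, 1 ≤ N → ∀ a : ℤ → ℝ≥0,
      (∑' j : ℤ, if -1 ≤ j then (ENNReal.ofReal (2 + (j:ℝ))) ^ η * (a j : ℝ≥0∞) else 0) < ⊤ →
      (∑' q : ℤ, if -1 ≤ q then
          (ENNReal.ofReal (2 + (q:ℝ))) ^ η *
            ∑' j : ℤ, if -1 ≤ j ∧ 3*(q:ℝ)/2 + N < (j:ℝ) then
                ENNReal.ofReal ((2:ℝ) ^ (-(1/2 : ℝ) * ((j:ℝ) - 3*(q:ℝ)/2))) * (a j : ℝ≥0∞)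
              else 0
        else 0)
      ≤ (C : ℝ≥0∞) * ENNReal.ofReal ((2:ℝ) ^ (-(N:ℝ)/2)) * (N : ℝ≥0∞) ^ η *
          ∑' j : ℤ, if -1 ≤ j then (ENNReal.ofReal (2 + (j:ℝ))) ^ η * (a j : ℝ≥0∞) else 0 := by
  refine ⟨7, by norm_num, fun N hN a _ => ?_⟩
  have hNη : 1 ≤ (N : ℝ≥0∞) ^ η := ENNReal.one_le_rpow (by exact_mod_cast hN) hη
  refine le_of_eq_of_le ?_
    ((ENNReal.tsum_le_tsum (tsum_weighted_column_le hη.le N (a ·))).trans ?_)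
  · rw [ENNReal.tsum_comm]
    refine tsum_congr fun q => ?_
    split_ifs
    · exact ENNReal.tsum_mul_left.symm
    · simp
  · rw [ENNReal.tsum_mul_left, ENNReal.coe_ofNat]
    exact mul_le_mul_left (le_mul_of_one_le_right' hNη) _
end

section
/- Let η > 1 be a real number and N₀ ≥ 1 an integer. There exists a constant C, depending only on η and N₀, such that for all families (A_q)_{q ≥ -1} and (B_q)_{q ≥ -1} of nonnegative real numbers, ( Σ_{j ≥ -1} ( Σ_{q ≥ -1, |q-j| ≤ N₀} A_q · Σ_{k=-1}^{q-2} B_k )² )^{1/2} ≤ C ( Σ_{q ≥ -1} (2+q)^η A_q ) ( Σ_{q ≥ -1} B_q² )^{1/2}. -/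
open scoped ENNReal NNReal

private lemma l2_le_l1_aux (a : ℤ → ℝ≥0∞) : ∑' j, (a j) ^ (2:ℕ) ≤ (∑' j, a j) ^ (2:ℕ) := by
  calc ∑' j, (a j) ^ (2:ℕ) ≤ ∑' j, a j * ∑' i, a i := by
        refine ENNReal.tsum_le_tsum fun j => ?_
        rw [pow_two]
        exact mul_le_mul_right (ENNReal.le_tsum j) _
    _ = (∑' j, a j) ^ (2:ℕ) := by rw [ENNReal.tsum_mul_right, pow_two]

/-- Paraproduct term estimate (`T_b a`) in the proof of Proposition 5.2: for `η > 1` and an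
integer `N₀ ≥ 1` there is a constant `C` such that for all nonnegative `(A_q)_{q ≥ -1}`,
`(B_q)_{q ≥ -1}`,
`( Σ_{j ≥ -1} ( Σ_{q ≥ -1, |q-j| ≤ N₀} A_q Σ_{k=-1}^{q-2} B_k )² )^{1/2}
  ≤ C ( Σ_{q ≥ -1} (2+q)^η A_q ) ( Σ_{q ≥ -1} B_q² )^{1/2}`. -/
theorem paraproduct_sequence_estimate (η : ℝ) (hη : 1 < η) (N₀ : ℕ) (hN₀ : 1 ≤ N₀) :
    ∃ C : ℝ≥0, 0 < C ∧ ∀ A B : ℤ → ℝ≥0,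
      (∑' j : ℤ, if -1 ≤ j then
          (∑' q : ℤ, if -1 ≤ q ∧ |q - j| ≤ (N₀ : ℤ) then
              (A q : ℝ≥0∞) * ∑ k ∈ Finset.Icc (-1 : ℤ) (q - 2), (B k : ℝ≥0∞)
            else 0) ^ (2:ℕ)
        else 0) ^ (1/2 : ℝ)
      ≤ (C : ℝ≥0∞) *
          (∑' q : ℤ, if -1 ≤ q then (ENNReal.ofReal (2 + (q:ℝ))) ^ η * (A q : ℝ≥0∞) else 0) *
          (∑' q : ℤ, if -1 ≤ q then (B q : ℝ≥0∞) ^ (2:ℕ) else 0) ^ (1/2 : ℝ) := by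
  refine ⟨((2 * N₀ + 1 : ℕ) : ℝ≥0), by positivity, fun A B => ?_⟩
  set T : ℝ≥0∞ := (∑' q : ℤ, if -1 ≤ q then (B q : ℝ≥0∞) ^ (2:ℕ) else 0) ^ (1/2 : ℝ) with hT
  set SA : ℝ≥0∞ := ∑' q : ℤ, if -1 ≤ q then
      (ENNReal.ofReal (2 + (q:ℝ))) ^ η * (A q : ℝ≥0∞) else 0 with hSA
  -- each B k is dominated by T
  have hB : ∀ k : ℤ, -1 ≤ k → (B k : ℝ≥0∞) ≤ T := by
    intro k hk
    have h1 : ((B k : ℝ≥0∞)) ^ (2:ℕ)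
        ≤ ∑' q : ℤ, if -1 ≤ q then (B q : ℝ≥0∞) ^ (2:ℕ) else 0 := by
      have := ENNReal.le_tsum (f := fun q : ℤ => if -1 ≤ q then (B q : ℝ≥0∞) ^ (2:ℕ) else 0) k
      simpa [hk] using this
    calc (B k : ℝ≥0∞) = (((B k : ℝ≥0∞)) ^ (2:ℕ)) ^ (1/2 : ℝ) := by
          rw [← ENNReal.rpow_natCast, ← ENNReal.rpow_mul]; norm_num
      _ ≤ T := ENNReal.rpow_le_rpow h1 (by norm_num)
  -- the weight (2+q)^η dominates the cardinality of Icc (-1) (q-2)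
  have hpow : ∀ q : ℤ, -1 ≤ q →
      (((Finset.Icc (-1 : ℤ) (q - 2)).card : ℝ≥0∞))
        ≤ (ENNReal.ofReal (2 + (q:ℝ))) ^ η := by
    intro q hq
    have hcard : (Finset.Icc (-1 : ℤ) (q - 2)).card = q.toNat := by
      rw [Int.card_Icc]; omega
    have hcR : ((q.toNat : ℕ) : ℝ) ≤ 2 + (q:ℝ) := by
      have h : ((q.toNat : ℕ) : ℤ) ≤ 2 + q := by omega
      exact_mod_cast h
    have h1le : (1:ℝ) ≤ 2 + (q:ℝ) := by
      have : (-1 : ℝ) ≤ (q : ℝ) := by exact_mod_cast hq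
      linarith
    calc (((Finset.Icc (-1 : ℤ) (q - 2)).card : ℝ≥0∞))
        = ENNReal.ofReal ((q.toNat : ℕ) : ℝ) := by rw [hcard, ENNReal.ofReal_natCast]
      _ ≤ ENNReal.ofReal (2 + (q:ℝ)) := ENNReal.ofReal_le_ofReal hcR
      _ = (ENNReal.ofReal (2 + (q:ℝ))) ^ (1:ℝ) := (ENNReal.rpow_one _).symm
      _ ≤ (ENNReal.ofReal (2 + (q:ℝ))) ^ η :=
          ENNReal.rpow_le_rpow_of_exponent_le
            (by rw [show (1:ℝ≥0∞) = ENNReal.ofReal 1 from (ENNReal.ofReal_one).symm];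
                exact ENNReal.ofReal_le_ofReal h1le) hη.le
  -- inner block sum bound
  have hinner : ∀ q : ℤ, -1 ≤ q →
      (∑ k ∈ Finset.Icc (-1 : ℤ) (q - 2), (B k : ℝ≥0∞))
        ≤ (ENNReal.ofReal (2 + (q:ℝ))) ^ η * T := by
    intro q hq
    calc (∑ k ∈ Finset.Icc (-1 : ℤ) (q - 2), (B k : ℝ≥0∞))
        ≤ (Finset.Icc (-1 : ℤ) (q - 2)).card • T := by
          refine Finset.sum_le_card_nsmul _ _ _ fun k hk => ?_
          exact hB k (Finset.mem_Icc.mp hk).1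
      _ = ((Finset.Icc (-1 : ℤ) (q - 2)).card : ℝ≥0∞) * T := by rw [nsmul_eq_mul]
      _ ≤ (ENNReal.ofReal (2 + (q:ℝ))) ^ η * T := mul_le_mul_left (hpow q hq) _
  -- the ℓ¹ bound on the double sum
  have hmain : (∑' j : ℤ, ∑' q : ℤ, if -1 ≤ q ∧ |q - j| ≤ (N₀ : ℤ) then
        (A q : ℝ≥0∞) * ∑ k ∈ Finset.Icc (-1 : ℤ) (q - 2), (B k : ℝ≥0∞) else 0)
      ≤ ((2 * N₀ + 1 : ℕ) : ℝ≥0∞) * SA * T := by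
    calc (∑' j : ℤ, ∑' q : ℤ, if -1 ≤ q ∧ |q - j| ≤ (N₀ : ℤ) then
            (A q : ℝ≥0∞) * ∑ k ∈ Finset.Icc (-1 : ℤ) (q - 2), (B k : ℝ≥0∞) else 0)
        ≤ ∑' j : ℤ, ∑' q : ℤ, if -1 ≤ q ∧ |q - j| ≤ (N₀ : ℤ) then
            (ENNReal.ofReal (2 + (q:ℝ))) ^ η * (A q : ℝ≥0∞) * T else 0 := by
          refine ENNReal.tsum_le_tsum fun j => ENNReal.tsum_le_tsum fun q => ?_
          by_cases h : -1 ≤ q ∧ |q - j| ≤ (N₀ : ℤ)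
          · simp only [h, if_true]
            calc (A q : ℝ≥0∞) * ∑ k ∈ Finset.Icc (-1 : ℤ) (q - 2), (B k : ℝ≥0∞)
                ≤ (A q : ℝ≥0∞) * ((ENNReal.ofReal (2 + (q:ℝ))) ^ η * T) :=
                  mul_le_mul_right (hinner q h.1) _
              _ = (ENNReal.ofReal (2 + (q:ℝ))) ^ η * (A q : ℝ≥0∞) * T := by ring
          · simp [h]
      _ = ∑' q : ℤ, ∑' j : ℤ, if -1 ≤ q ∧ |q - j| ≤ (N₀ : ℤ) then
            (ENNReal.ofReal (2 + (q:ℝ))) ^ η * (A q : ℝ≥0∞) * T else 0 := ENNReal.tsum_comm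
      _ ≤ ∑' q : ℤ, (if -1 ≤ q then ((2 * N₀ + 1 : ℕ) : ℝ≥0∞) *
            ((ENNReal.ofReal (2 + (q:ℝ))) ^ η * (A q : ℝ≥0∞) * T) else 0) := by
          refine ENNReal.tsum_le_tsum fun q => ?_
          by_cases hq : -1 ≤ q
          · rw [if_pos hq]
            set c : ℝ≥0∞ := (ENNReal.ofReal (2 + (q:ℝ))) ^ η * (A q : ℝ≥0∞) * T with hc
            have hzero : ∀ j : ℤ, j ∉ Finset.Icc (q - (N₀ : ℤ)) (q + (N₀ : ℤ)) →
                (if -1 ≤ q ∧ |q - j| ≤ (N₀ : ℤ) then c else 0) = 0 := by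
              intro j hj
              rw [Finset.mem_Icc] at hj
              have : ¬ (|q - j| ≤ (N₀ : ℤ)) := by
                rw [abs_le]; omega
              simp [this]
            rw [tsum_eq_sum hzero]
            calc (∑ j ∈ Finset.Icc (q - (N₀ : ℤ)) (q + (N₀ : ℤ)),
                    if -1 ≤ q ∧ |q - j| ≤ (N₀ : ℤ) then c else 0)
                ≤ (Finset.Icc (q - (N₀ : ℤ)) (q + (N₀ : ℤ))).card • c := by
                  refine Finset.sum_le_card_nsmul _ _ _ fun j _ => ?_
                  split_ifs <;> simp
              _ = ((2 * N₀ + 1 : ℕ) : ℝ≥0∞) * c := by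
                  rw [nsmul_eq_mul, Int.card_Icc]
                  congr 2
                  omega
          · have : ∀ j : ℤ, (if -1 ≤ q ∧ |q - j| ≤ (N₀ : ℤ) then
                (ENNReal.ofReal (2 + (q:ℝ))) ^ η * (A q : ℝ≥0∞) * T else 0) = 0 := by
              intro j; simp [hq]
            simp [this]
      _ = ((2 * N₀ + 1 : ℕ) : ℝ≥0∞) * SA * T := by
          rw [hSA, mul_assoc, ← ENNReal.tsum_mul_right, ← ENNReal.tsum_mul_left]
          refine tsum_congr fun q => ?_
          by_cases hq : -1 ≤ q <;> simp [hq, mul_assoc]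
  -- put everything together
  have hstep : (∑' j : ℤ, if -1 ≤ j then
        (∑' q : ℤ, if -1 ≤ q ∧ |q - j| ≤ (N₀ : ℤ) then
            (A q : ℝ≥0∞) * ∑ k ∈ Finset.Icc (-1 : ℤ) (q - 2), (B k : ℝ≥0∞)
          else 0) ^ (2:ℕ)
      else 0)
      ≤ (((2 * N₀ + 1 : ℕ) : ℝ≥0∞) * SA * T) ^ (2:ℕ) := by
    calc (∑' j : ℤ, if -1 ≤ j then
            (∑' q : ℤ, if -1 ≤ q ∧ |q - j| ≤ (N₀ : ℤ) then
                (A q : ℝ≥0∞) * ∑ k ∈ Finset.Icc (-1 : ℤ) (q - 2), (B k : ℝ≥0∞)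
              else 0) ^ (2:ℕ)
          else 0)
        ≤ ∑' j : ℤ, (∑' q : ℤ, if -1 ≤ q ∧ |q - j| ≤ (N₀ : ℤ) then
            (A q : ℝ≥0∞) * ∑ k ∈ Finset.Icc (-1 : ℤ) (q - 2), (B k : ℝ≥0∞)
          else 0) ^ (2:ℕ) := by
          refine ENNReal.tsum_le_tsum fun j => ?_
          split_ifs <;> simp
      _ ≤ (∑' j : ℤ, ∑' q : ℤ, if -1 ≤ q ∧ |q - j| ≤ (N₀ : ℤ) then
            (A q : ℝ≥0∞) * ∑ k ∈ Finset.Icc (-1 : ℤ) (q - 2), (B k : ℝ≥0∞)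
          else 0) ^ (2:ℕ) := l2_le_l1_aux _
      _ ≤ (((2 * N₀ + 1 : ℕ) : ℝ≥0∞) * SA * T) ^ (2:ℕ) := pow_le_pow_left' hmain 2
  calc (∑' j : ℤ, if -1 ≤ j then
          (∑' q : ℤ, if -1 ≤ q ∧ |q - j| ≤ (N₀ : ℤ) then
              (A q : ℝ≥0∞) * ∑ k ∈ Finset.Icc (-1 : ℤ) (q - 2), (B k : ℝ≥0∞)
            else 0) ^ (2:ℕ)
        else 0) ^ (1/2 : ℝ)
      ≤ ((((2 * N₀ + 1 : ℕ) : ℝ≥0∞) * SA * T) ^ (2:ℕ)) ^ (1/2 : ℝ) :=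
        ENNReal.rpow_le_rpow hstep (by norm_num)
    _ = ((2 * N₀ + 1 : ℕ) : ℝ≥0∞) * SA * T := by
        rw [← ENNReal.rpow_natCast, ← ENNReal.rpow_mul]; norm_num
    _ = (((2 * N₀ + 1 : ℕ) : ℝ≥0) : ℝ≥0∞) * SA * T := by norm_cast
end

section
/- Let η > 1 be a real number and N₀ ≥ 1 an integer. There exists a constant C, depending only on η and N₀, such that for all families (A_q)_{q ≥ -1} and (B_q)_{q ≥ -1} of nonnegative real numbers, ( Σ_{j ≥ -1} ( Σ_{q ≥ max(j-N₀, -1)} A_q B_q )² )^{1/2} ≤ C ( Σ_{q ≥ -1} (2+q)^η A_q ) ( Σ_{q ≥ -1} B_q² )^{1/2}. -/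
/-!
For `j ≥ -1` put `m = max (j - N₀) (-1)`. On the tail `q ≥ m` the weight `(2 + q)^η` is at least
`(2 + m)^η`, and every `B_q` is bounded by `‖B‖_{ℓ²}`, so the `j`-th inner sum is at most
`(2 + m)^{-η} T ‖B‖_{ℓ²}`, with `T` the weighted `ℓ¹` norm of `A`. Squaring and summing over `j`,
each value of `m` occurs at most `N₀ + 1` times, so the constant is controlled by
`(N₀ + 1) Σ_{k ≥ -1} (2 + k)^{-2η}`, which is finite because `2η > 1`.
-/

open scoped ENNReal NNReal

theorem ENNReal.sq_rpow_one_div_two (x : ℝ≥0∞) : (x ^ 2) ^ (1 / 2 : ℝ) = x := by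
  simpa using ENNReal.pow_rpow_inv_natCast two_ne_zero x

section

variable {ι : Type*}

theorem le_rpow_half_tsum_ite_sq (p : ι → Prop) [DecidablePred p] (g : ι → ℝ≥0∞) {i : ι}
    (hi : p i) : g i ≤ (∑' k, if p k then g k ^ 2 else 0) ^ (1 / 2 : ℝ) :=
  calc g i = (g i ^ 2) ^ (1 / 2 : ℝ) := (ENNReal.sq_rpow_one_div_two _).symm
    _ ≤ _ := by
      gcongr
      simpa [hi] using ENNReal.le_tsum (f := fun k => if p k then g k ^ 2 else 0) i

theorem mul_tsum_ite_mul_le (p r : ι → Prop) [DecidablePred p] [DecidablePred r]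
    {f g ρ : ι → ℝ≥0∞} {c U : ℝ≥0∞} (hpr : ∀ i, p i → r i) (hc : ∀ i, p i → c ≤ ρ i)
    (hU : ∀ i, r i → g i ≤ U) :
    c * ∑' i, (if p i then f i * g i else 0) ≤ (∑' i, if r i then ρ i * f i else 0) * U := by
  rw [← ENNReal.tsum_mul_left, ← ENNReal.tsum_mul_right]
  refine ENNReal.tsum_le_tsum fun i => ?_
  by_cases hp : p i
  · rw [if_pos hp, if_pos (hpr i hp), ← mul_assoc]
    gcongr
    exacts [hc i hp, hU i (hpr i hp)]
  · simp [hp]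

end

theorem tsum_ite_max_sub_le (f : ℤ → ℝ≥0∞) (a : ℤ) (N : ℕ) :
    ∑' j : ℤ, (if a ≤ j then f (max (j - N) a) else 0)
      ≤ (N + 1) * ∑' k : ℤ, if a ≤ k then f k else 0 := by
  set g : ℤ → ℝ≥0∞ := fun k => if a ≤ k then f k else 0
  have hterm (j : ℤ) :
      (if a ≤ j then f (max (j - N) a) else 0) ≤ ∑ i ∈ Finset.range (N + 1), g (j - i) := by
    split_ifs with hj
    · -- `max (j - N) a` is one of `j, j - 1, …, j - N`
      obtain ⟨i, hi, hmax⟩ : ∃ i ∈ Finset.range (N + 1), j - i = max (j - N) a :=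
        ⟨(j - max (j - N) a).toNat, by simp only [Finset.mem_range]; omega, by omega⟩
      calc f (max (j - N) a) = g (j - i) := by simp [g, hmax]
        _ ≤ _ := Finset.single_le_sum (f := fun i : ℕ => g (j - i)) (fun _ _ => zero_le) hi
    · exact zero_le
  calc _ ≤ ∑' j, ∑ i ∈ Finset.range (N + 1), g (j - i) := ENNReal.tsum_le_tsum hterm
    _ = ∑ i ∈ Finset.range (N + 1), ∑' j, g (j - i) :=
      Summable.tsum_finsetSum fun _ _ => ENNReal.summable
    _ = (N + 1) * ∑' k, g k := by
      have hshift (i : ℕ) : ∑' j, g (j - i) = ∑' k, g k := (Equiv.subRight (i : ℤ)).tsum_eq g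
      simp only [hshift, Finset.sum_const, Finset.card_range, nsmul_eq_mul, Nat.cast_add,
        Nat.cast_one]

theorem tsum_ite_ofReal_two_add_rpow_neg_ne_top {s : ℝ} (hs : 1 < s) :
    ∑' k : ℤ, (if -1 ≤ k then ENNReal.ofReal (2 + k) ^ (-s) else 0) ≠ ∞ := by
  refine ne_top_of_le_ne_top ((Real.summable_one_div_int_add_rpow 2 s).2 hs).tsum_ofReal_ne_top
    (ENNReal.tsum_le_tsum fun k => ?_)
  split_ifs with hk
  · have hpos : (0 : ℝ) < k + 2 := by
      have : (-1 : ℝ) ≤ k := by exact_mod_cast hk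
      linarith
    rw [add_comm, ENNReal.ofReal_rpow_of_pos hpos, abs_of_pos hpos, Real.rpow_neg hpos.le,
      one_div]
  · exact zero_le

theorem sq_tsum_tail_mul_le {η : ℝ} (hη : 0 ≤ η) (A B : ℤ → ℝ≥0∞) {m : ℤ} (hm : -1 ≤ m) :
    (∑' q : ℤ, if m ≤ q then A q * B q else 0) ^ 2
      ≤ ENNReal.ofReal (2 + m) ^ (-(2 * η)) *
        ((∑' q : ℤ, if -1 ≤ q then ENNReal.ofReal (2 + q) ^ η * A q else 0) *
          (∑' q : ℤ, if -1 ≤ q then B q ^ 2 else 0) ^ (1 / 2 : ℝ)) ^ 2 := by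
  have hm' : (1 : ℝ) ≤ 2 + m := by
    have : (-1 : ℝ) ≤ m := by exact_mod_cast hm
    linarith
  set c := ENNReal.ofReal (2 + m) ^ η
  have hc0 : c ≠ 0 :=
    (ENNReal.rpow_pos (ENNReal.ofReal_pos.2 (by linarith)) ENNReal.ofReal_ne_top).ne'
  have hctop : c ≠ ∞ := ENNReal.rpow_ne_top_of_nonneg hη ENNReal.ofReal_ne_top
  have htail := mul_tsum_ite_mul_le (fun q : ℤ => m ≤ q) (fun q : ℤ => -1 ≤ q) (f := A) (g := B)
    (ρ := fun q : ℤ => ENNReal.ofReal (2 + q) ^ η) (c := c) (fun q hq => hm.trans hq)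
    (fun q hq => by
      have : (m : ℝ) ≤ q := by exact_mod_cast hq
      exact ENNReal.rpow_le_rpow (ENNReal.ofReal_le_ofReal (by linarith)) hη)
    (fun q hq => le_rpow_half_tsum_ite_sq (fun q : ℤ => -1 ≤ q) B hq)
  have hweight : ENNReal.ofReal (2 + m) ^ (-(2 * η)) = (c ^ 2)⁻¹ := by
    rw [ENNReal.rpow_neg, mul_comm, ENNReal.rpow_mul, ENNReal.rpow_two]
  rw [hweight, ← ENNReal.mul_le_iff_le_inv (pow_ne_zero 2 hc0) (ENNReal.pow_ne_top hctop),
    ← mul_pow]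
  gcongr

theorem remainder_sequence_estimate_general (η : ℝ) (hη : 1 < η) (N₀ : ℕ) :
    ∃ C : ℝ≥0, 0 < C ∧ ∀ A B : ℤ → ℝ≥0,
      (∑' j : ℤ, if -1 ≤ j then
          (∑' q : ℤ, if max (j - N₀) (-1) ≤ q then (A q : ℝ≥0∞) * (B q : ℝ≥0∞) else 0) ^ (2:ℕ)
        else 0) ^ (1/2 : ℝ)
      ≤ (C : ℝ≥0∞) *
          (∑' q : ℤ, if -1 ≤ q then (ENNReal.ofReal (2 + (q:ℝ))) ^ η * (A q : ℝ≥0∞) else 0) *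
          (∑' q : ℤ, if -1 ≤ q then (B q : ℝ≥0∞) ^ (2:ℕ) else 0) ^ (1/2 : ℝ) := by
  set Z := ∑' k : ℤ, if -1 ≤ k then ENNReal.ofReal (2 + k) ^ (-(2 * η)) else 0
  have hZ : Z ≠ ∞ := tsum_ite_ofReal_two_add_rpow_neg_ne_top (by linarith)
  have hZ1 : 1 ≤ Z := by
    simpa [show (2 : ℝ) + -1 = 1 by norm_num] using ENNReal.le_tsum (f := fun k : ℤ =>
      if -1 ≤ k then ENNReal.ofReal (2 + k) ^ (-(2 * η)) else 0) (-1)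
  set K := (((N₀ : ℝ≥0∞) + 1) * Z) ^ (1 / 2 : ℝ)
  have hK : K ≠ ∞ := ENNReal.rpow_ne_top_of_nonneg (by norm_num) (by finiteness)
  have hK1 : 1 ≤ K := ENNReal.one_le_rpow (le_mul_of_one_le_of_le le_add_self hZ1) (by norm_num)
  refine ⟨K.toNNReal, ENNReal.toNNReal_pos (one_pos.trans_le hK1).ne' hK, fun A B => ?_⟩
  rw [ENNReal.coe_toNNReal hK, mul_assoc]
  set TU := (∑' q : ℤ, if -1 ≤ q then ENNReal.ofReal (2 + q) ^ η * (A q : ℝ≥0∞) else 0) *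
    (∑' q : ℤ, if -1 ≤ q then (B q : ℝ≥0∞) ^ 2 else 0) ^ (1 / 2 : ℝ)
  calc _ ≤ (((N₀ : ℝ≥0∞) + 1) * Z * TU ^ 2) ^ (1 / 2 : ℝ) := by
        gcongr
        calc _ ≤ ∑' j : ℤ, (if -1 ≤ j then
                ENNReal.ofReal (2 + (max (j - N₀) (-1) : ℤ)) ^ (-(2 * η)) else 0) * TU ^ 2 :=
              ENNReal.tsum_le_tsum fun j => by
                split_ifs
                · exact sq_tsum_tail_mul_le (by linarith) _ _ (le_max_right _ _)
                · simp
          _ ≤ _ := by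
              rw [ENNReal.tsum_mul_right]
              gcongr
              exact tsum_ite_max_sub_le _ (-1) N₀
    _ = K * TU := by
        rw [ENNReal.mul_rpow_of_nonneg _ _ (by norm_num), ENNReal.sq_rpow_one_div_two]

/-- Remainder term estimate (`R(a,b)`) in the proof of Proposition 5.2: for `η > 1` and an
integer `N₀ ≥ 1` there is a constant `C` such that for all nonnegative `(A_q)_{q ≥ -1}`,
`(B_q)_{q ≥ -1}`,
`( Σ_{j ≥ -1} ( Σ_{q ≥ max(j-N₀,-1)} A_q B_q )² )^{1/2}
  ≤ C ( Σ_{q ≥ -1} (2+q)^η A_q ) ( Σ_{q ≥ -1} B_q² )^{1/2}`. -/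
theorem remainder_sequence_estimate (η : ℝ) (hη : 1 < η) (N₀ : ℕ) (hN₀ : 1 ≤ N₀) :
    ∃ C : ℝ≥0, 0 < C ∧ ∀ A B : ℤ → ℝ≥0,
      (∑' j : ℤ, if -1 ≤ j then
          (∑' q : ℤ, if max (j - N₀) (-1) ≤ q then (A q : ℝ≥0∞) * (B q : ℝ≥0∞) else 0) ^ (2:ℕ)
        else 0) ^ (1/2 : ℝ)
      ≤ (C : ℝ≥0∞) *
          (∑' q : ℤ, if -1 ≤ q then (ENNReal.ofReal (2 + (q:ℝ))) ^ η * (A q : ℝ≥0∞) else 0) *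
          (∑' q : ℤ, if -1 ≤ q then (B q : ℝ≥0∞) ^ (2:ℕ) else 0) ^ (1/2 : ℝ) :=
  remainder_sequence_estimate_general η hη N₀
end
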